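/- Let π : X' → X be a finite morphism of schemes with X an integral normal variety over an algebraically closed field, let U ⊆ X be a dense open subscheme, and let s : U → X' be a section of π over U (π ∘ s = incl). Then s extends to a section s̃ : X → X' of π. -/

import Mathlib

/-!
Since `X` is integral, `s` is a rational map `X ⤏ X'`, determined by the `K(X)`-point `ψ` of `X'`
it induces. Given `x : X`, pick an affine open `V ∋ x`. The ring map `Γ(X', π⁻¹V) → K(X)` dual to
`ψ` has image integral over `Γ(X, V)`, hence over `𝒪_{X,x}`, hence inside `𝒪_{X,x}` by normality.
This gives an `𝒪_{X,x}`-point of `X'` over `X` extending `ψ`, which spreads out to a partial map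
defined at `x` and generically equal to `s`. So the rational map is defined everywhere, and since
`X'` is separated it is a morphism `X ⟶ X'`; it is a section of `π` because it is one on the
dense open `U`.
-/

open AlgebraicGeometry CategoryTheory

theorem IsIntegrallyClosedIn.exists_lift_of_isIntegral {R A B K : Type*} [CommRing R] [CommRing A]
    [CommRing B] [CommRing K] [Algebra A K] [IsIntegrallyClosedIn A K]
    (f : R →+* B) (hf : f.IsIntegral) (g : R →+* A) (ψ : B →+* K)
    (h : ψ.comp f = (algebraMap A K).comp g) :
    ∃ χ : B →+* A, χ.comp f = g ∧ (algebraMap A K).comp χ = ψ := by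
  have hinj : Function.Injective (algebraMap A K) := IsIntegralClosure.algebraMap_injective A A K
  have hrange (b : B) : ψ b ∈ (algebraMap A K).range := by
    obtain ⟨p, hmonic, hp⟩ := hf b
    refine IsIntegrallyClosedIn.isIntegral_iff.mp ⟨p.map g, hmonic.map g, ?_⟩
    rw [Polynomial.eval₂_map, ← h, ← Polynomial.hom_eval₂, hp, map_zero]
  let χ : B →+* A := ((RingEquiv.ofLeftInverse (Function.leftInverse_invFun hinj)).symm :
    _ →+* A).comp (ψ.codRestrict _ hrange)
  have hχ : (algebraMap A K).comp χ = ψ := RingHom.ext fun b ↦ Function.invFun_eq (hrange b)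
  refine ⟨χ, (RingHom.cancel_left hinj).mp ?_, hχ⟩
  rw [← RingHom.comp_assoc, hχ, h]

namespace AlgebraicGeometry.Scheme

variable {X Y : Scheme}

lemma preimage_fromSpecStalk_eq_top {x : X} {V : X.Opens} (hx : x ∈ V) :
    X.fromSpecStalk x ⁻¹ᵁ V = ⊤ := by
  refine top_unique fun z _ ↦ ?_
  have hz : (X.fromSpecStalk x).base z ∈ {y | y ⤳ x} :=
    range_fromSpecStalk (x := x) ▸ Set.mem_range_self z
  exact hz.mem_open V.2 hx

lemma Hom.SpecMap_appLE_ΓSpecIso_hom_fromSpec {R : CommRingCat} (f : Spec R ⟶ Y) {W : Y.Opens}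
    (hW : IsAffineOpen W) (h : ⊤ ≤ f ⁻¹ᵁ W) :
    Spec.map (f.appLE W ⊤ h ≫ (Scheme.ΓSpecIso R).hom) ≫ hW.fromSpec = f := by
  rw [Spec.map_comp, Category.assoc,
    IsAffineOpen.SpecMap_appLE_fromSpec f hW (isAffineOpen_top _) h, IsAffineOpen.fromSpec_top,
    ← Category.assoc, Scheme.isoSpec_Spec_inv, ← Spec.map_comp,
    Iso.inv_hom_id, Spec.map_id, Category.id_comp]

lemma PartialMap.SpecMap_stalkSpecializes_fromSpecStalkOfMem (f : X.PartialMap Y) {x y : X}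
    (h : y ⤳ x) (hx : x ∈ f.domain) :
    Spec.map (X.presheaf.stalkSpecializes h) ≫ f.fromSpecStalkOfMem hx =
      f.fromSpecStalkOfMem (h.mem_open f.domain.2 hx) := by
  rw [PartialMap.fromSpecStalkOfMem, PartialMap.fromSpecStalkOfMem, ← Category.assoc]
  congr 1
  rw [← cancel_mono f.domain.ι, Category.assoc, Opens.fromSpecStalkOfMem_ι,
    Opens.fromSpecStalkOfMem_ι, SpecMap_stalkSpecializes_fromSpecStalk]

lemma exists_SpecStalk_extension_of_isIntegralHom [IsIntegral X] (π : Y ⟶ X) [IsIntegralHom π]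
    (x : X) [IsIntegrallyClosed (X.presheaf.stalk x)] (ψ : Spec X.functionField ⟶ Y)
    (hψ : ψ ≫ π = X.fromSpecStalk (genericPoint X)) :
    ∃ φ : Spec (X.presheaf.stalk x) ⟶ Y, φ ≫ π = X.fromSpecStalk x ∧
      Spec.map (X.presheaf.stalkSpecializes (genericPoint_specializes x)) ≫ φ = ψ := by
  obtain ⟨V, hV, hxV, -⟩ := exists_isAffineOpen_mem_and_subset (U := ⊤) trivial
  have hW : IsAffineOpen (π ⁻¹ᵁ V) := hV.preimage π
  have hψV : ⊤ ≤ ψ ⁻¹ᵁ π ⁻¹ᵁ V := by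
    rw [← Hom.comp_preimage, hψ,
      preimage_fromSpecStalk_eq_top ((genericPoint_specializes x).mem_open V.2 hxV)]
  set ψV := ψ.appLE (π ⁻¹ᵁ V) ⊤ hψV ≫ (Scheme.ΓSpecIso X.functionField).hom
  have hψ_eq : Spec.map ψV ≫ hW.fromSpec = ψ := ψ.SpecMap_appLE_ΓSpecIso_hom_fromSpec hW hψV
  have hgerm : Spec.map (X.presheaf.germ V x hxV) ≫ hV.fromSpec = X.fromSpecStalk x :=
    hV.fromSpecStalk_eq_fromSpecStalk hxV
  have hsq : π.app V ≫ ψV = X.presheaf.germ V x hxV ≫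
      X.presheaf.stalkSpecializes (genericPoint_specializes x) := by
    apply Spec.map_injective
    rw [← cancel_mono hV.fromSpec, Spec.map_comp, Category.assoc, Hom.app_eq_appLE,
      IsAffineOpen.SpecMap_appLE_fromSpec π hV hW le_rfl, ← Category.assoc, hψ_eq, hψ,
      Spec.map_comp, Category.assoc, hgerm, SpecMap_stalkSpecializes_fromSpecStalk]
  obtain ⟨χ, hχπ, hχψ⟩ :=
    IsIntegrallyClosedIn.exists_lift_of_isIntegral (K := X.functionField) (π.app V).hom
      (π.isIntegral_app V hV) (X.presheaf.germ V x hxV).hom ψV.hom congr(($hsq).hom)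
  let χ' : Γ(Y, π ⁻¹ᵁ V) ⟶ X.presheaf.stalk x := CommRingCat.ofHom χ
  have hχ'π : π.app V ≫ χ' = X.presheaf.germ V x hxV := CommRingCat.hom_ext hχπ
  have hχ'ψ : χ' ≫ X.presheaf.stalkSpecializes (genericPoint_specializes x) = ψV :=
    CommRingCat.hom_ext hχψ
  refine ⟨Spec.map χ' ≫ hW.fromSpec, ?_, ?_⟩
  · rw [Category.assoc, ← IsAffineOpen.SpecMap_appLE_fromSpec π hV hW le_rfl,
      ← Spec.map_comp_assoc, ← Hom.app_eq_appLE, hχ'π, hgerm]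
  · rw [← Spec.map_comp_assoc, hχ'ψ, hψ_eq]

lemma RationalMap.domain_eq_top_of_isFinite [IsIntegral X]
    [∀ x : X, IsIntegrallyClosed (X.presheaf.stalk x)] (π : Y ⟶ X) [IsFinite π] (f : X ⤏ Y)
    (hf : f.fromFunctionField ≫ π = X.fromSpecStalk (genericPoint X)) : f.domain = ⊤ := by
  refine top_unique fun x _ ↦ RationalMap.mem_domain.mpr ?_
  obtain ⟨φ, hφπ, hφf⟩ :=
    exists_SpecStalk_extension_of_isIntegralHom π x f.fromFunctionField hf
  have hφπ' : φ ≫ π = X.fromSpecStalk x ≫ 𝟙 X := by rw [hφπ, Category.comp_id]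
  let g := PartialMap.ofFromSpecStalk (𝟙 X) π φ hφπ'
  have hxg : x ∈ g.domain := PartialMap.mem_domain_ofFromSpecStalk (𝟙 X) π φ hφπ'
  refine ⟨g, hxg, RationalMap.eq_of_fromFunctionField_eq _ _ ?_⟩
  rw [RationalMap.fromFunctionField_toRationalMap, ← hφf,
    ← PartialMap.fromSpecStalkOfMem_ofFromSpecStalk (𝟙 X) π φ hφπ',
    PartialMap.SpecMap_stalkSpecializes_fromSpecStalkOfMem]

lemma PartialMap.exists_hom_of_domain_toRationalMap_eq_top [IsReduced X] [Y.IsSeparated]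
    (f : X.PartialMap Y) (hf : f.toRationalMap.domain = ⊤) :
    ∃ g : X ⟶ Y, f.domain.ι ≫ g = f.hom := by
  let g := f.toRationalMap.toPartialMap
  have hg : g.domain = ⊤ := hf
  have hι : f.domain.ι ≫ X.topIso.inv ≫ (X.isoOfEq hg).inv =
      X.homOfLE (U := f.domain) (V := g.domain) f.le_domain_toRationalMap := by
    rw [← cancel_mono g.domain.ι]
    simp only [Category.assoc, isoOfEq_inv_ι, toIso_inv_ι, Category.comp_id]
    exact (X.homOfLE_ι _).symm
  refine ⟨X.topIso.inv ≫ (X.isoOfEq hg).inv ≫ g.hom, ?_⟩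
  rw [reassoc_of% hι]
  exact f.toPartialMap_toRationalMap_restrict

end AlgebraicGeometry.Scheme

theorem stmt_11_general (k : Type) [Field k]
    (X X' : Scheme) [IsIntegral X]
    (hnormal : ∀ x : X, IsIntegrallyClosed (X.presheaf.stalk x))
    (p : X ⟶ Spec (CommRingCat.of k))
    [AlgebraicGeometry.IsSeparated p]
    (π : X' ⟶ X) [IsFinite π]
    (U : X.Opens) (hU : Dense (U : Set X))
    (s : U.toScheme ⟶ X') (hs : s ≫ π = U.ι) :
    ∃ st : X ⟶ X', st ≫ π = 𝟙 X ∧ U.ι ≫ st = s := by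
  have : X.IsSeparated := ⟨by rw [← Limits.terminal.comp_from p]; infer_instance⟩
  have : X'.IsSeparated := ⟨by rw [← Limits.terminal.comp_from (π ≫ p)]; infer_instance⟩
  let f : X.PartialMap X' := ⟨U, hU, s⟩
  have hf : f.toRationalMap.fromFunctionField ≫ π = X.fromSpecStalk (genericPoint X) := by
    change (U.fromSpecStalkOfMem _ _ ≫ s) ≫ π = _
    rw [Category.assoc, hs, Scheme.Opens.fromSpecStalkOfMem_ι]
  obtain ⟨st, hst⟩ := f.exists_hom_of_domain_toRationalMap_eq_top
    (f.toRationalMap.domain_eq_top_of_isFinite π hf)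
  have : IsDominant U.ι := Opens.isDominant_ι hU
  refine ⟨st, ext_of_isDominant U.ι ?_, hst⟩
  rw [← Category.assoc, hst, hs, Category.comp_id]

/-- Let `π : X' → X` be a finite morphism of schemes where `X` is an integral,
normal variety (separated, finite type) over an algebraically closed field `k`, let `U ⊆ X`
be a dense open subscheme, and let `s : U → X'` be a section of `π` over `U`
(i.e. `s ≫ π = U.ι`).  Then `s` extends to a section `s̃ : X → X'` of `π`. -/
theorem stmt_11 (k : Type) [Field k] [IsAlgClosed k]
    (X X' : Scheme) [IsIntegral X]
    (hnormal : ∀ x : X, IsIntegrallyClosed (X.presheaf.stalk x))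
    (p : X ⟶ Spec (CommRingCat.of k))
    [LocallyOfFiniteType p] [QuasiCompact p] [AlgebraicGeometry.IsSeparated p]
    (π : X' ⟶ X) [IsFinite π]
    (U : X.Opens) (hU : Dense (U : Set X))
    (s : U.toScheme ⟶ X') (hs : s ≫ π = U.ι) :
    ∃ st : X ⟶ X', st ≫ π = 𝟙 X ∧ U.ι ≫ st = s :=
  stmt_11_general k X X' hnormal p π U hU s hs
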